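/- arXiv:1506.05826 — 5 statements merged into one kernel-verified Lean document; each statement's English description precedes it below -/
import Mathlib

section
/- For every natural number n ≥ 3, the 3-hairy n-cycle C_n ⋆ S_3 admits a prime vertex labeling; that is, there exists a bijection f from the vertex set of C_n ⋆ S_3 onto {1, 2, ..., 4n} such that whenever two vertices u and v are adjacent, gcd(f(u), f(v)) = 1. -/
/-- The `m`-hairy `n`-cycle `C_n ⋆ S_m` on vertex set `Fin n × Fin (m+1)`:
the vertices `(i, 0)` form the cycle (with `(i,0)` adjacent to `(j,0)` iff
`j = i + 1 (mod n)` or `i = j + 1 (mod n)`), and for `j ≠ 0` the pendant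
vertex `(i, j)` is adjacent exactly to `(i, 0)`. -/
def hairyCycle (n m : ℕ) : SimpleGraph (Fin n × Fin (m + 1)) :=
  SimpleGraph.fromRel fun a b =>
    (a.2 = 0 ∧ b.2 = 0 ∧ (b.1 : ℕ) = ((a.1 : ℕ) + 1) % n) ∨
    (a.2 = 0 ∧ b.1 = a.1 ∧ b.2 ≠ 0)

/-!
Give block `i` (the cycle vertex `(i, 0)` and its three hairs) the labels `4i+1, …, 4i+4`,
with the center labelled `4i+3`. Center labels are odd, so a center is coprime to labels at
distance `1`, `2` or `4` from it, which covers every hair and every cycle edge except the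
closing edge between `4n-1` and `3`. That edge fails exactly when `n ≡ 1 (mod 3)`; in that case
the last center takes `4n-3` instead, which is `≡ 1 (mod 3)`, so it is coprime to `3` and
to the hair `4n` at distance `3`.
-/

open Set Nat

lemma bijOn_val_add_one (N : ℕ) : BijOn (fun x : Fin N => (x : ℕ) + 1) univ (Icc 1 N) :=
  ⟨fun x _ => ⟨by simp, by simp [x.2]⟩, fun x _ y _ h => Fin.ext (by simpa using h),
    fun k hk => ⟨⟨k - 1, by grind⟩, mem_univ _, by grind⟩⟩

lemma bijOn_blockLabel {n k : ℕ} (σ : Fin n → Equiv.Perm (Fin k)) :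
    BijOn (fun p : Fin n × Fin k => k * p.1 + σ p.1 p.2 + 1) univ (Icc 1 (k * n)) := by
  have hσ := finProdFinEquiv.bijective.comp (Equiv.prodShear (Equiv.refl _) σ).bijective
  convert (bijOn_val_add_one (n * k)).comp hσ.bijOn_univ using 2
  · simp [add_comm]
  · rw [mul_comm]

lemma Nat.coprime_of_add_eq_of_dvd_four {a b d : ℕ} (ha : Odd a) (hd : d ∣ 4)
    (hb : a + d = b) : Coprime a b :=
  hb ▸ coprime_self_add_right.mpr (Coprime.coprime_dvd_right hd (ha.coprime_two_right.pow_right 2))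

lemma Nat.coprime_three_right_of_not_dvd {a : ℕ} (ha : ¬ 3 ∣ a) : Coprime a 3 :=
  (prime_three.coprime_iff_not_dvd.mpr ha).symm

lemma Nat.coprime_of_add_three_eq {a b : ℕ} (ha : ¬ 3 ∣ a) (hb : a + 3 = b) : Coprime a b :=
  hb ▸ coprime_self_add_right.mpr (coprime_three_right_of_not_dvd ha)

namespace HairyCycleThree

/-- The block whose center is labelled `4i+1` rather than `4i+3`. -/
def IsLowCenter (n i : ℕ) : Prop := n % 3 = 1 ∧ i + 1 = n

instance (n i : ℕ) : Decidable (IsLowCenter n i) := instDecidableAnd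

def blockPerm (n i : ℕ) : Equiv.Perm (Fin 4) :=
  if IsLowCenter n i then 1 else Equiv.swap 0 2

def label (n : ℕ) (p : Fin n × Fin 4) : ℕ := 4 * p.1 + blockPerm n p.1 p.2 + 1

lemma label_center (n : ℕ) (i : Fin n) :
    label n (i, 0) = 4 * i + if IsLowCenter n i then 1 else 3 := by
  unfold label blockPerm
  split_ifs <;> simp

lemma coprime_label_center_hair {n : ℕ} (i : Fin n) {j : Fin 4} (hj : j ≠ 0) :
    Coprime (label n (i, 0)) (label n (i, j)) := by
  simp only [label, blockPerm]
  split_ifs with h <;> unfold IsLowCenter at h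
  · fin_cases j <;> simp at hj ⊢
    · exact coprime_of_add_eq_of_dvd_four (d := 2) (odd_iff.mpr (by omega)) (by norm_num)
        (by omega)
    · exact coprime_of_add_three_eq (by omega) (by omega)
  · fin_cases j <;> simp [Equiv.swap_apply_of_ne_of_ne] at hj ⊢
    exact (coprime_of_add_eq_of_dvd_four (d := 2) (odd_iff.mpr (by omega)) (by norm_num)
      (by omega)).symm

lemma coprime_label_center_succ {n : ℕ} (i j : Fin n) (hij : (j : ℕ) = (i + 1) % n) :
    Coprime (label n (i, 0)) (label n (j, 0)) := by
  have hi := i.2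
  rw [label_center, label_center]
  by_cases hwrap : (i : ℕ) + 1 = n
  · have hj : (j : ℕ) = 0 := by rw [hij, hwrap, mod_self]
    refine Coprime.coprime_dvd_right (m := 3) ?_ (coprime_three_right_of_not_dvd ?_)
    · split_ifs <;> simp [hj]
    · split_ifs with h <;> unfold IsLowCenter at h <;> omega
  · have hj : (j : ℕ) = i + 1 := by rw [hij, mod_eq_of_lt (by omega)]
    rw [if_neg (by unfold IsLowCenter; omega)]
    split_ifs
    · exact coprime_of_add_eq_of_dvd_four (d := 2) (odd_iff.mpr (by omega)) (by norm_num)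
        (by omega)
    · exact coprime_of_add_eq_of_dvd_four (d := 4) (odd_iff.mpr (by omega)) (by norm_num)
        (by omega)

end HairyCycleThree

open HairyCycleThree in
theorem hairyCycle_three_is_coprime_general (n : ℕ) :
    ∃ f : Fin n × Fin 4 → ℕ,
      Set.BijOn f Set.univ (Set.Icc 1 (4 * n)) ∧
      ∀ u v, (hairyCycle n 3).Adj u v → Nat.gcd (f u) (f v) = 1 := by
  refine ⟨label n, bijOn_blockLabel fun i => blockPerm n i, ?_⟩
  have hrel : ∀ u v : Fin n × Fin 4, (u.2 = 0 ∧ v.2 = 0 ∧ (v.1 : ℕ) = ((u.1 : ℕ) + 1) % n) ∨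
      (u.2 = 0 ∧ v.1 = u.1 ∧ v.2 ≠ 0) → Coprime (label n u) (label n v) := by
    rintro ⟨i, a⟩ ⟨j, b⟩ (⟨rfl, rfl, hij⟩ | ⟨rfl, rfl, hb⟩)
    exacts [coprime_label_center_succ i j hij, coprime_label_center_hair _ hb]
  rintro u v ⟨-, huv | hvu⟩
  exacts [hrel u v huv, (hrel v u hvu).symm]

/-- All 3-hairy `n`-cycles `C_n ⋆ S_3` admit a prime vertex labeling. -/
theorem hairyCycle_three_is_coprime (n : ℕ) (hn : 3 ≤ n) :
    ∃ f : Fin n × Fin 4 → ℕ,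
      Set.BijOn f Set.univ (Set.Icc 1 (4 * n)) ∧
      ∀ u v, (hairyCycle n 3).Adj u v → Nat.gcd (f u) (f v) = 1 :=
  hairyCycle_three_is_coprime_general n
end

section
/- For every natural number n ≥ 3, the 7-hairy n-cycle C_n ⋆ S_7 admits a prime vertex labeling; that is, there exists a bijection f from the vertex set of C_n ⋆ S_7 onto {1, 2, ..., 8n} such that whenever two vertices u and v are adjacent, gcd(f(u), f(v)) = 1. -/
/-!
Cut `{1, …, 8n}` into the blocks `{8i+1, …, 8i+8}` and give block `i` to the star at the cycle
vertex `i`. The hub of star `0` gets the label `1`, which is coprime to everything. For `i ≥ 1`,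
of the three odd numbers `8i+3, 8i+5, 8i+7` exactly one is a multiple of `3` and at most one a
multiple of `5`, so one of them is coprime to `120 = 2³·3·5`; this one labels the hub. A pendant
label then differs from its hub label by at most `6`, and consecutive hub labels differ by an even
number between `4` and `12`. All these distances divide `120`, so every edge gets coprime labels.
-/

open Nat

theorem Nat.Coprime.of_natAbs_sub_dvd {a b m : ℕ} (ha : Coprime a m)
    (hab : ((b : ℤ) - a).natAbs ∣ m) : Coprime a b := by
  have hsub : IsCoprime (a : ℤ) ((b : ℤ) - a) := by
    rw [Int.isCoprime_iff_gcd_eq_one]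
    exact ha.coprime_dvd_right hab
  rw [← Nat.isCoprime_iff_coprime]
  simpa using hsub.add_mul_left_right 1

theorem Nat.coprime_120_iff (a : ℕ) : Coprime a 120 ↔ ¬ 2 ∣ a ∧ ¬ 3 ∣ a ∧ ¬ 5 ∣ a := by
  rw [show 120 = 2 ^ 3 * 3 * 5 by norm_num, coprime_mul_iff_right, coprime_mul_iff_right,
    coprime_pow_right_iff (by norm_num), coprime_comm, prime_two.coprime_iff_not_dvd, coprime_comm,
    prime_three.coprime_iff_not_dvd, coprime_comm, prime_five.coprime_iff_not_dvd, and_assoc]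

theorem Set.bijOn_Icc_of_equiv_fin {α : Type*} {N : ℕ} (e : α ≃ Fin N) :
    Set.BijOn (fun x => (e x : ℕ) + 1) Set.univ (Set.Icc 1 N) := by
  refine ⟨fun x _ => ⟨Nat.le_add_left 1 _, (e x).isLt⟩,
    fun x _ y _ h => e.injective (Fin.ext (Nat.add_right_cancel h)), fun y hy => ?_⟩
  obtain ⟨hy1, hyN⟩ := hy
  exact ⟨e.symm ⟨y - 1, by omega⟩, trivial, by simp only [Equiv.apply_symm_apply]; omega⟩

namespace HairyCycle

def hubSlot (i : ℕ) : Fin 8 :=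
  if i = 0 then 0
  else if Coprime (8 * i + 3) 120 then 2
  else if Coprime (8 * i + 5) 120 then 4
  else 6

def hubLabel (i : ℕ) : ℕ := 8 * i + hubSlot i + 1

theorem hubLabel_zero : hubLabel 0 = 1 := rfl

theorem hubSlot_of_ne_zero {i : ℕ} (hi : i ≠ 0) :
    (hubSlot i : ℕ) = 2 ∨ (hubSlot i : ℕ) = 4 ∨ (hubSlot i : ℕ) = 6 := by
  rw [hubSlot, if_neg hi]
  split_ifs <;> simp

theorem coprime_hubLabel {i : ℕ} (hi : i ≠ 0) : Coprime (hubLabel i) 120 := by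
  rw [hubLabel, hubSlot, if_neg hi]
  split_ifs with h3 h5
  · exact h3
  · exact h5
  · rw [coprime_120_iff] at *
    simp only [Fin.isValue, Fin.coe_ofNat_eq_mod, reduceMod]
    omega

theorem coprime_hubLabel_of_lt_eight {i x : ℕ} (hx : x < 8) (hne : x ≠ hubSlot i) :
    Coprime (hubLabel i) (8 * i + x + 1) := by
  rcases eq_or_ne i 0 with rfl | hi
  · exact coprime_one_left _
  refine (coprime_hubLabel hi).of_natAbs_sub_dvd ?_
  set d := (((8 * i + x + 1 : ℕ) : ℤ) - hubLabel i).natAbs with hd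
  have hdist : 0 < d ∧ d ≤ 6 := by
    have hslot := hubSlot_of_ne_zero hi
    simp only [hd, hubLabel]
    push_cast
    omega
  obtain ⟨h0, h6⟩ := hdist
  interval_cases d <;> norm_num

theorem coprime_hubLabel_succ (i : ℕ) : Coprime (hubLabel i) (hubLabel (i + 1)) := by
  rcases eq_or_ne i 0 with rfl | hi
  · exact coprime_one_left _
  refine (coprime_hubLabel hi).of_natAbs_sub_dvd ?_
  set d := ((hubLabel (i + 1) : ℤ) - hubLabel i).natAbs with hd
  have hdist : d = 4 ∨ d = 6 ∨ d = 8 ∨ d = 10 ∨ d = 12 := by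
    have hslot := hubSlot_of_ne_zero hi
    have hslot' := hubSlot_of_ne_zero (Nat.add_one_ne_zero i)
    simp only [hd, hubLabel]
    push_cast
    omega
  rcases hdist with h | h | h | h | h <;> rw [h] <;> norm_num

/-- `(Fin.cycleRange k).symm` sends `0` to `k`, so the hub `(i, 0)` gets slot `hubSlot i` of
block `i`. -/
def labelEquiv (n : ℕ) : Fin n × Fin 8 ≃ Fin (n * 8) :=
  (Equiv.prodCongrRight fun i : Fin n => (Fin.cycleRange (hubSlot i)).symm).trans finProdFinEquiv

theorem labelEquiv_apply (n : ℕ) (v : Fin n × Fin 8) :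
    (labelEquiv n v : ℕ) + 1 = 8 * v.1 + (Fin.cycleRange (hubSlot v.1)).symm v.2 + 1 := by
  simp only [labelEquiv, Equiv.trans_apply, finProdFinEquiv_apply_val,
    Equiv.prodCongrRight_apply_snd, Equiv.prodCongrRight_apply_fst]
  ring

theorem labelEquiv_hub (n : ℕ) (i : Fin n) : (labelEquiv n (i, 0) : ℕ) + 1 = hubLabel i := by
  rw [labelEquiv_apply, Fin.cycleRange_symm_zero, hubLabel]

theorem coprime_label_of_rel {n : ℕ} {u v : Fin n × Fin 8}
    (h : (u.2 = 0 ∧ v.2 = 0 ∧ (v.1 : ℕ) = ((u.1 : ℕ) + 1) % n) ∨ (u.2 = 0 ∧ v.1 = u.1 ∧ v.2 ≠ 0)) :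
    Coprime ((labelEquiv n u : ℕ) + 1) ((labelEquiv n v : ℕ) + 1) := by
  obtain ⟨i, j⟩ := u
  obtain ⟨k, l⟩ := v
  rcases h with ⟨rfl, rfl, hk⟩ | ⟨rfl, hki, hl⟩
  · rw [labelEquiv_hub, labelEquiv_hub]
    rcases Nat.lt_or_ge (i + 1) n with hlt | hge
    · rw [show (k : ℕ) = i + 1 by rw [hk, Nat.mod_eq_of_lt hlt]]
      exact coprime_hubLabel_succ i
    · rw [show (k : ℕ) = 0 by rw [hk, show (i : ℕ) + 1 = n by omega, Nat.mod_self], hubLabel_zero]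
      exact coprime_one_right _
  · replace hki : k = i := hki
    subst k
    rw [labelEquiv_hub, labelEquiv_apply]
    refine coprime_hubLabel_of_lt_eight (Fin.isLt _) fun heq =>
      hl ((Fin.cycleRange (hubSlot i)).symm.injective ?_)
    rw [Fin.cycleRange_symm_zero]
    exact Fin.ext heq

end HairyCycle

open HairyCycle in
theorem hairyCycle_seven_is_coprime_general (n : ℕ) :
    ∃ f : Fin n × Fin 8 → ℕ,
      Set.BijOn f Set.univ (Set.Icc 1 (8 * n)) ∧
      ∀ u v, (hairyCycle n 7).Adj u v → Nat.gcd (f u) (f v) = 1 := by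
  refine ⟨fun v => labelEquiv n v + 1,
    by simpa [mul_comm] using Set.bijOn_Icc_of_equiv_fin (labelEquiv n), ?_⟩
  rintro u v ⟨-, h | h⟩
  · exact coprime_label_of_rel h
  · exact (coprime_label_of_rel h).symm

/-- All 7-hairy `n`-cycles `C_n ⋆ S_7` admit a prime vertex labeling. -/
theorem hairyCycle_seven_is_coprime (n : ℕ) (hn : 3 ≤ n) :
    ∃ f : Fin n × Fin 8 → ℕ,
      Set.BijOn f Set.univ (Set.Icc 1 (8 * n)) ∧
      ∀ u v, (hairyCycle n 7).Adj u v → Nat.gcd (f u) (f v) = 1 :=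
  hairyCycle_seven_is_coprime_general n
end

section
/- For every natural number n ≥ 3, the Bertrand Weed graph BW_n admits a prime vertex labeling; that is, there exists a bijection f from the vertex set of BW_n onto {1, 2, ..., 2^(n+1) − 2} such that whenever two vertices u and v are adjacent, gcd(f(u), f(v)) = 1. -/
/-- The Bertrand Weed graph `BW_n` on vertex set `Σ i : Fin n, Fin (2^(i+1))`:
the vertices `(i, 0)` form the cycle (with `(i,0)` adjacent to `(j,0)` iff
`j = i + 1 (mod n)` or `i = j + 1 (mod n)`), and for `j ≠ 0` the pendant
vertex `(i, j)` is adjacent exactly to `(i, 0)`; thus the cycle vertex `c_i`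
(for `i = 0, ..., n-1` here, corresponding to `c_{i+1}` in 1-indexed notation)
carries `2^(i+1) - 1` pendants. -/
def bertrandWeed (n : ℕ) : SimpleGraph (Σ i : Fin n, Fin (2 ^ ((i : ℕ) + 1))) :=
  SimpleGraph.fromRel fun a b =>
    ((a.2 : ℕ) = 0 ∧ (b.2 : ℕ) = 0 ∧ (b.1 : ℕ) = ((a.1 : ℕ) + 1) % n) ∨
    ((a.2 : ℕ) = 0 ∧ b.1 = a.1 ∧ (b.2 : ℕ) ≠ 0)

/-!
Enumerating the clumps in order, the clump at the `i`-th cycle vertex (0-indexed) receives the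
interval `[m, 2m]` with `m = 2^(i+1) - 1`. By Bertrand's postulate this interval contains a prime
`p > m`, which we give to the cycle vertex. Distinct cycle vertices then carry distinct primes, and
every pendant label `x` of the clump satisfies `0 < x < 2p`, `x ≠ p`, so `p ∤ x`.
-/

theorem sum_fin_two_pow_succ_add_two (i : ℕ) :
    ∑ k : Fin i, 2 ^ ((k : ℕ) + 1) + 2 = 2 ^ (i + 1) := by
  induction i with
  | zero => simp
  | succ i ih =>
    rw [Fin.sum_univ_castSucc, pow_succ 2 (i + 1)]
    simp only [Fin.val_castSucc, Fin.val_last]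
    omega

theorem Fin.bijOn_val_add_one (N : ℕ) :
    Set.BijOn (fun i : Fin N => (i : ℕ) + 1) Set.univ (Set.Icc 1 N) := by
  refine ⟨fun i _ => by simp, fun a _ b _ h => Fin.ext (by simpa using h), ?_⟩
  rintro m ⟨h1, h2⟩
  exact ⟨⟨m - 1, by omega⟩, trivial, by simp; omega⟩

theorem Nat.Prime.coprime_of_lt_two_mul {p x : ℕ} (hp : p.Prime) (hx0 : 0 < x) (hx : x < 2 * p)
    (hne : x ≠ p) : p.Coprime x := by
  refine hp.coprime_iff_not_dvd.2 fun ⟨c, hc⟩ => hne ?_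
  obtain _ | _ | c := c
  · omega
  · simpa using hc
  · nlinarith

theorem exists_pos_le_add_prime {m : ℕ} (hm : m ≠ 0) : ∃ k, 0 < k ∧ k ≤ m ∧ (m + k).Prime := by
  obtain ⟨p, hp, hmp, hpm⟩ := Nat.exists_prime_lt_and_le_two_mul m hm
  exact ⟨p - m, by omega, by omega, by rwa [Nat.add_sub_cancel' hmp.le]⟩

namespace bertrandWeed

variable {n : ℕ}

theorem adj_cases {u v : Σ i : Fin n, Fin (2 ^ ((i : ℕ) + 1))} (h : (bertrandWeed n).Adj u v) :
    u ≠ v ∧ ((u.2 : ℕ) = 0 ∧ (v.2 : ℕ) = 0 ∨ (u.2 : ℕ) = 0 ∧ v.1 = u.1 ∨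
      (v.2 : ℕ) = 0 ∧ u.1 = v.1) := by
  rw [bertrandWeed, SimpleGraph.fromRel_adj] at h
  obtain ⟨hne, h⟩ := h
  refine ⟨hne, ?_⟩
  rcases h with (h | h) | (h | h) <;> simp_all

theorem coprime_of_adj (f : (Σ i : Fin n, Fin (2 ^ ((i : ℕ) + 1))) → ℕ)
    (hf : Function.Injective f) (hpos : ∀ v, 0 < f v)
    (hprime : ∀ v, (v.2 : ℕ) = 0 → (f v).Prime)
    (hlt : ∀ u v, u.1 = v.1 → (u.2 : ℕ) = 0 → f v < 2 * f u) {u v}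
    (h : (bertrandWeed n).Adj u v) : (f u).Coprime (f v) := by
  have hub : ∀ u v, (u.2 : ℕ) = 0 → v.1 = u.1 → u ≠ v → (f u).Coprime (f v) :=
    fun u v hu huv hne =>
      (hprime u hu).coprime_of_lt_two_mul (hpos v) (hlt u v huv.symm hu) (hf.ne hne.symm)
  obtain ⟨hne, ⟨hu, hv⟩ | ⟨hu, huv⟩ | ⟨hv, huv⟩⟩ := adj_cases h
  · exact (Nat.coprime_primes (hprime u hu) (hprime v hv)).2 (hf.ne hne)
  · exact hub u v hu huv hne
  · exact (hub v u hv huv hne.symm).symm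

/-- `finSigmaFinEquiv` lists the clumps consecutively, so clump `i` receives the labels
`2^(i+1) - 1, ..., 2^(i+2) - 2`, of which the cycle vertex gets the `k i`-th. -/
def label (k : ∀ i : Fin n, Fin (2 ^ ((i : ℕ) + 1)))
    (v : Σ i : Fin n, Fin (2 ^ ((i : ℕ) + 1))) : ℕ :=
  finSigmaFinEquiv (Equiv.sigmaCongrRight (fun i => Equiv.swap 0 (k i)) v) + 1

variable (k : ∀ i : Fin n, Fin (2 ^ ((i : ℕ) + 1)))

theorem label_bijOn : Set.BijOn (label k) Set.univ (Set.Icc 1 (2 ^ (n + 1) - 2)) := by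
  have hsum : ∑ i : Fin n, 2 ^ ((i : ℕ) + 1) = 2 ^ (n + 1) - 2 := by
    have := sum_fin_two_pow_succ_add_two n
    omega
  rw [← hsum]
  exact (Fin.bijOn_val_add_one _).comp
    (Set.bijOn_univ.2 (finSigmaFinEquiv.bijective.comp (Equiv.bijective _)))

theorem label_add_one (v : Σ i : Fin n, Fin (2 ^ ((i : ℕ) + 1))) :
    label k v + 1 = 2 ^ ((v.1 : ℕ) + 1) + Equiv.swap 0 (k v.1) v.2 := by
  have := sum_fin_two_pow_succ_add_two v.1
  simp only [label, Equiv.sigmaCongrRight_apply, finSigmaFinEquiv_apply, Fin.val_castLE]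
  omega

theorem label_of_snd_eq_zero {v : Σ i : Fin n, Fin (2 ^ ((i : ℕ) + 1))} (hv : (v.2 : ℕ) = 0) :
    label k v = 2 ^ ((v.1 : ℕ) + 1) - 1 + k v.1 := by
  have := label_add_one k v
  rw [show v.2 = 0 from Fin.ext hv, Equiv.swap_apply_left] at this
  omega

theorem label_lt_two_mul {u v : Σ i : Fin n, Fin (2 ^ ((i : ℕ) + 1))} (huv : u.1 = v.1)
    (hu : (u.2 : ℕ) = 0) (hk : 0 < (k u.1 : ℕ)) : label k v < 2 * label k u := by
  have hv := label_add_one k v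
  have hlt := (Equiv.swap 0 (k v.1) v.2).isLt
  rw [label_of_snd_eq_zero k hu, huv] at *
  omega

end bertrandWeed

theorem bertrandWeed_is_coprime_general (n : ℕ) :
    ∃ f : (Σ i : Fin n, Fin (2 ^ ((i : ℕ) + 1))) → ℕ,
      Set.BijOn f Set.univ (Set.Icc 1 (2 ^ (n + 1) - 2)) ∧
      ∀ u v, (bertrandWeed n).Adj u v → Nat.gcd (f u) (f v) = 1 := by
  have hbertrand : ∀ i : Fin n, ∃ k : Fin (2 ^ ((i : ℕ) + 1)),
      0 < (k : ℕ) ∧ (2 ^ ((i : ℕ) + 1) - 1 + (k : ℕ)).Prime := by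
    intro i
    have := Nat.one_lt_two_pow (n := (i : ℕ) + 1) (by omega)
    obtain ⟨k, hk0, hkm, hp⟩ := exists_pos_le_add_prime (m := 2 ^ ((i : ℕ) + 1) - 1) (by omega)
    exact ⟨⟨k, by omega⟩, hk0, hp⟩
  choose k hk0 hprime using hbertrand
  have hbij := bertrandWeed.label_bijOn k
  refine ⟨bertrandWeed.label k, hbij, fun u v h => bertrandWeed.coprime_of_adj _
    (Set.injOn_univ.1 hbij.injOn) (fun _ => Nat.succ_pos _) (fun v hv => ?_)
    (fun u v huv hu => bertrandWeed.label_lt_two_mul k huv hu (hk0 u.1)) h⟩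
  rw [bertrandWeed.label_of_snd_eq_zero k hv]
  exact hprime v.1

/-- All Bertrand Weed graphs `BW_n` admit a prime vertex labeling. -/
theorem bertrandWeed_is_coprime (n : ℕ) (hn : 3 ≤ n) :
    ∃ f : (Σ i : Fin n, Fin (2 ^ ((i : ℕ) + 1))) → ℕ,
      Set.BijOn f Set.univ (Set.Icc 1 (2 ^ (n + 1) - 2)) ∧
      ∀ u v, (bertrandWeed n).Adj u v → Nat.gcd (f u) (f v) = 1 :=
  bertrandWeed_is_coprime_general n
end

section
/- For every natural number i ≥ 1 and every natural number m with 8i − 7 ≤ m ≤ 8i and m ≠ L(i), one has gcd(L(i), m) = 1, where L(i) = 8i − 5 if i mod 15 ∈ {2, 3, 6, 8, 9, 11, 12, 14}, L(i) = 8i − 3 if i mod 15 ∈ {4, 5, 7, 10, 13}, and L(i) = 8i − 1 if i mod 15 ∈ {0, 1}. -/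
/-!
The label `L i` lies in `[8i - 5, 8i - 1]`, so it differs from every other element of the block
`[8i - 7, 8i]` by at most 6, and a common prime factor of two distinct numbers divides their
difference. It therefore suffices that `L i` is prime to `6# = 30`; since `8 * 15 ≡ 0 [MOD 30]`,
this depends only on `i mod 15`, and is exactly what the case split in the definition arranges.
-/

/-- The cycle-vertex label in the prime vertex labeling of the 7-hairy
`n`-cycle: within the block `{8i-7, ..., 8i}`, the label `L i` is chosen by
cases on `i mod 15`. -/
def hairySevenLabel (i : ℕ) : ℕ :=
  if i % 15 ∈ ({2, 3, 6, 8, 9, 11, 12, 14} : Finset ℕ) then 8 * i - 5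
  else if i % 15 ∈ ({4, 5, 7, 10, 13} : Finset ℕ) then 8 * i - 3
  else 8 * i - 1

namespace Nat

theorem dvd_primorial {p n : ℕ} (hp : p.Prime) (hpn : p ≤ n) : p ∣ primorial n :=
  dvd_of_mem_primeFactors <| by
    rw [primeFactors_primorial]
    exact mem_primesLE.mpr ⟨hpn, hp⟩

theorem coprime_of_coprime_primorial {a b k : ℕ} (ha : a.Coprime (primorial k))
    (hne : a ≠ b) (hab : a ≤ b + k) (hba : b ≤ a + k) : a.Coprime b := by
  refine coprime_of_dvd fun p hp hpa hpb => ?_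
  have hpk : p ≤ k := by
    rcases lt_or_gt_of_ne hne with h | h
    · exact (le_of_dvd (by omega) (Nat.dvd_sub hpb hpa)).trans (by omega)
    · exact (le_of_dvd (by omega) (Nat.dvd_sub hpa hpb)).trans (by omega)
  exact hp.one_lt.ne' (eq_one_of_dvd_coprimes ha hpa (dvd_primorial hp hpk))

theorem primorial_six : primorial 6 = 30 := by decide

end Nat

theorem hairySevenLabel_mem_Icc (i : ℕ) :
    hairySevenLabel i ∈ Finset.Icc (8 * i - 5) (8 * i - 1) := by
  unfold hairySevenLabel
  split_ifs <;> simp only [Finset.mem_Icc] <;> omega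

theorem hairySevenLabel_coprime_thirty {i : ℕ} (hi : 1 ≤ i) :
    (hairySevenLabel i).Coprime 30 := by
  have hndvd : ¬ 2 ∣ hairySevenLabel i ∧ ¬ 3 ∣ hairySevenLabel i ∧ ¬ 5 ∣ hairySevenLabel i := by
    unfold hairySevenLabel
    split_ifs <;> simp only [Finset.mem_insert, Finset.mem_singleton] at * <;> omega
  obtain ⟨h2, h3, h5⟩ := hndvd
  have coprime_of_not_dvd {p : ℕ} (hp : p.Prime) (h : ¬ p ∣ hairySevenLabel i) :
      (hairySevenLabel i).Coprime p :=
    (hp.coprime_iff_not_dvd.mpr h).symm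
  rw [show (30 : ℕ) = 2 * 3 * 5 by norm_num]
  exact .mul_right (.mul_right (coprime_of_not_dvd Nat.prime_two h2)
    (coprime_of_not_dvd Nat.prime_three h3)) (coprime_of_not_dvd Nat.prime_five h5)

/-- For every `i ≥ 1`, the label `L i` is relatively prime to every other
element of its block `{8i-7, ..., 8i}`. -/
theorem hairySevenLabel_coprime_block (i : ℕ) (hi : 1 ≤ i) (m : ℕ)
    (h1 : 8 * i - 7 ≤ m) (h2 : m ≤ 8 * i) (hm : m ≠ hairySevenLabel i) :
    Nat.gcd (hairySevenLabel i) m = 1 := by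
  have hL := Finset.mem_Icc.mp (hairySevenLabel_mem_Icc i)
  refine Nat.coprime_of_coprime_primorial (k := 6) ?_ hm.symm (by omega) (by omega)
  rw [Nat.primorial_six]
  exact hairySevenLabel_coprime_thirty hi
end

section
/- For every natural number i ≥ 1, gcd(L(i), L(i+1)) = 1, where L(i) = 8i − 5 if i mod 15 ∈ {2, 3, 6, 8, 9, 11, 12, 14}, L(i) = 8i − 3 if i mod 15 ∈ {4, 5, 7, 10, 13}, and L(i) = 8i − 1 if i mod 15 ∈ {0, 1}. -/
/-!
For `i ≥ 1` every label is `8 i - c` with `c ∈ {1, 3, 5}`, so two consecutive labels differ by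
`8 + c - c' ∈ {4, 6, 8, 10, 12}`, a number whose only prime factors are `2`, `3` and `5`.
A common prime divisor of `L i` and `L (i + 1)` divides this difference, hence is `2`, `3`
or `5`; the residues of `i` mod `15` are chosen exactly so that `L i` is prime to `30`.
-/

theorem Nat.Coprime.self_add_of_dvd_pow {a m d : ℕ} (k : ℕ) (ha : a.Coprime m)
    (hd : d ∣ m ^ k) : a.Coprime (a + d) :=
  Nat.coprime_self_add_right.mpr ((ha.pow_right k).coprime_dvd_right hd)

theorem exists_hairySevenLabel_add_eq {i : ℕ} (hi : 1 ≤ i) :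
    ∃ c ∈ ({1, 3, 5} : Finset ℕ), hairySevenLabel i + c = 8 * i := by
  unfold hairySevenLabel
  split_ifs
  · exact ⟨5, by decide, by omega⟩
  · exact ⟨3, by decide, by omega⟩
  · exact ⟨1, by decide, by omega⟩

theorem exists_hairySevenLabel_succ_eq_add {i : ℕ} (hi : 1 ≤ i) :
    ∃ d ∈ ({4, 6, 8, 10, 12} : Finset ℕ), hairySevenLabel (i + 1) = hairySevenLabel i + d := by
  obtain ⟨c, hc, h⟩ := exists_hairySevenLabel_add_eq hi
  obtain ⟨c', hc', h'⟩ := exists_hairySevenLabel_add_eq (Nat.le_add_left 1 i)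
  have hdiff : ∀ c ∈ ({1, 3, 5} : Finset ℕ), ∀ c' ∈ ({1, 3, 5} : Finset ℕ),
      ∃ d ∈ ({4, 6, 8, 10, 12} : Finset ℕ), 8 + c = c' + d := by decide
  obtain ⟨d, hd, hcd⟩ := hdiff c hc c' hc'
  exact ⟨d, hd, by omega⟩

/-- For every `i ≥ 1`, consecutive cycle-vertex labels `L i` and `L (i+1)`
are relatively prime. -/
theorem hairySevenLabel_coprime_succ (i : ℕ) (hi : 1 ≤ i) :
    Nat.gcd (hairySevenLabel i) (hairySevenLabel (i + 1)) = 1 := by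
  obtain ⟨d, hd, hstep⟩ := exists_hairySevenLabel_succ_eq_add hi
  have hd_dvd : d ∣ 30 ^ 3 := by
    have : ∀ d ∈ ({4, 6, 8, 10, 12} : Finset ℕ), d ∣ 30 ^ 3 := by decide
    exact this d hd
  rw [hstep]
  exact (hairySevenLabel_coprime_thirty hi).self_add_of_dvd_pow 3 hd_dvd
end
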